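/- arXiv:1903.04633 — 2 statements merged into one kernel-verified Lean document; each statement's English description precedes it below -/
import Mathlib

section
/- Let n ≥ 1 and write points of ℂⁿ as (z₁, z̃) with z₁ ∈ ℂ and z̃ ∈ ℂ^{n−1}. Let ψ be a real-valued real-analytic function on a neighborhood of 0 in ℂⁿ with ψ(0) = 0, and suppose the real Fréchet derivative at 0 of the function z₁ ↦ ψ(z₁, 0) is nonzero. Then there exist ε > 0 and δ > 0 such that for every z̃ ∈ ℂ^{n−1} with ‖z̃‖ < δ and every function Φ : ℂ → ℂ that is holomorphic on the disc D = {z₁ : |z₁| < ε}, if Φ(z₁) = 0 for every z₁ ∈ D with ψ(z₁, z̃) = 0, then Φ vanishes identically on D. -/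
/-! For every small `z̃`, the slice `ψ(·, z̃)` takes both signs on the disc of radius `ε / 2`:
a nonzero derivative of `ψ(·, 0)` at the origin rules out a local extremum there, and continuity
of `ψ` preserves the signs of the two witnesses under small changes of `z̃`. A disc minus
countably many points is still connected, so the slice has infinitely many zeros in the smaller
disc; they accumulate inside the larger one, and the identity theorem gives `Φ = 0`. -/

open Metric Set Filter Topology

section RealNormedSpace

variable {E : Type*} [NormedAddCommGroup E] [NormedSpace ℝ E]

theorem Set.Countable.isConnected_ball_diff (h : 1 < Module.rank ℝ E) {S : Set E}
    (hS : S.Countable) (c : E) {r : ℝ} (hr : 0 < r) : IsConnected (ball c r \ S) := by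
  set e := OpenPartialHomeomorph.univBall (E := E) c r
  have hrange : range e = ball c r := by
    rw [← image_univ, ← OpenPartialHomeomorph.univBall_source c r, e.image_source_eq_target,
      OpenPartialHomeomorph.univBall_target c hr]
  have hpre : (e ⁻¹' S).Countable :=
    hS.preimage_of_injOn (e.injOn.mono (by simp [e]))
  rw [← hrange, ← image_compl_preimage]
  exact (hpre.isConnected_compl_of_one_lt_rank h).image _
    (OpenPartialHomeomorph.continuous_univBall c r).continuousOn

theorem infinite_setOf_zero_of_sign_change (h : 1 < Module.rank ℝ E) {u : E → ℝ} {c : E}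
    {r : ℝ} (hu : ContinuousOn u (ball c r)) {a b : E} (ha : a ∈ ball c r) (hb : b ∈ ball c r)
    (hua : u a < 0) (hub : 0 < u b) : {z ∈ ball c r | u z = 0}.Infinite := by
  intro hfin
  have hconn := (hfin.countable.isConnected_ball_diff h c (pos_of_mem_ball ha)).isPreconnected
  obtain ⟨z, ⟨hz, hzZ⟩, hz0⟩ := hconn.intermediate_value (a := a) (b := b)
    ⟨ha, fun h' => hua.ne h'.2⟩ ⟨hb, fun h' => hub.ne' h'.2⟩ (hu.mono sdiff_subset)
    ⟨hua.le, hub.le⟩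
  exact hzZ ⟨hz, hz0⟩

variable {f : E → ℝ} {f' : E →L[ℝ] ℝ} {x : E}

theorem HasFDerivAt.frequently_lt_of_ne_zero (hf : HasFDerivAt f f' x) (hf' : f' ≠ 0) :
    ∃ᶠ y in 𝓝 x, f y < f x := fun h =>
  hf' <| IsLocalMin.hasFDerivAt_eq_zero (h.mono fun _ => le_of_not_gt) hf

theorem HasFDerivAt.frequently_gt_of_ne_zero (hf : HasFDerivAt f f' x) (hf' : f' ≠ 0) :
    ∃ᶠ y in 𝓝 x, f x < f y := fun h =>
  hf' <| IsLocalMax.hasFDerivAt_eq_zero (h.mono fun _ => le_of_not_gt) hf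

end RealNormedSpace

theorem AnalyticOnNhd.eqOn_zero_of_infinite_zeros {𝕜 E : Type*} [NontriviallyNormedField 𝕜]
    [NormedAddCommGroup E] [NormedSpace 𝕜 E] {f : 𝕜 → E} {U K : Set 𝕜}
    (hf : AnalyticOnNhd 𝕜 f U) (hU : IsPreconnected U) (hK : IsCompact K) (hKU : K ⊆ U)
    (hZ : {z ∈ K | f z = 0}.Infinite) : EqOn f 0 U := by
  obtain ⟨x, hxK, hacc⟩ := hZ.exists_accPt_of_subset_isCompact hK (sep_subset _ _)
  exact hf.eqOn_zero_of_preconnected_of_frequently_eq_zero hU (hKU hxK)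
    ((accPt_iff_frequently_nhdsNE.mp hacc).mono fun _ hz => hz.2)

theorem holomorphic_vanishing_on_hypersurface_slice_general
    {n : ℕ}
    (W : Set (ℂ × (Fin (n - 1) → ℂ))) (hW : IsOpen W) (h0W : ((0 : ℂ), (0 : Fin (n - 1) → ℂ)) ∈ W)
    (ψ : ℂ × (Fin (n - 1) → ℂ) → ℝ) (hψ : AnalyticOnNhd ℝ ψ W)
    (hψ0 : ψ (0, 0) = 0)
    (ψ' : ℂ →L[ℝ] ℝ) (hψ' : HasFDerivAt (fun z₁ : ℂ => ψ (z₁, 0)) ψ' 0) (hψ'ne : ψ' ≠ 0) :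
    ∃ ε > (0 : ℝ), ∃ δ > (0 : ℝ),
      (∀ (z₁ : ℂ) (zt : Fin (n - 1) → ℂ), ‖z₁‖ < ε → ‖zt‖ < δ → (z₁, zt) ∈ W) ∧
      ∀ zt : Fin (n - 1) → ℂ, ‖zt‖ < δ →
        ∀ Φ : ℂ → ℂ, AnalyticOnNhd ℂ Φ (ball (0 : ℂ) ε) →
          (∀ z₁ ∈ ball (0 : ℂ) ε, ψ (z₁, zt) = 0 → Φ z₁ = 0) →
          ∀ z₁ ∈ ball (0 : ℂ) ε, Φ z₁ = 0 := by
  obtain ⟨ε, hε, hεW⟩ := Metric.isOpen_iff.mp hW _ h0W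
  have hmemW : ∀ z₁ ∈ ball (0 : ℂ) ε, ∀ zt ∈ ball 0 ε, (z₁, zt) ∈ W := fun z₁ h₁ zt h₂ =>
    hεW (by simp_all [← Prod.zero_eq_mk, Prod.norm_def])
  have hhalf : ball (0 : ℂ) (ε / 2) ⊆ ball 0 ε := ball_subset_ball (half_le_self hε.le)
  obtain ⟨a, hψa, ha⟩ := ((hψ'.frequently_lt_of_ne_zero hψ'ne).and_eventually
    (ball_mem_nhds 0 (half_pos hε))).exists
  obtain ⟨b, hψb, hb⟩ := ((hψ'.frequently_gt_of_ne_zero hψ'ne).and_eventually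
    (ball_mem_nhds 0 (half_pos hε))).exists
  simp only [hψ0] at hψa hψb
  have hslice : ∀ z₁ ∈ ball (0 : ℂ) ε, ContinuousAt (fun zt => ψ (z₁, zt)) 0 := fun z₁ hz₁ =>
    (hψ.continuousOn.continuousAt (hW.mem_nhds (hmemW z₁ hz₁ 0 (mem_ball_self hε)))).comp
      (Continuous.prodMk_right z₁).continuousAt
  have hsign : ∀ᶠ zt in 𝓝 0, ψ (a, zt) < 0 ∧ 0 < ψ (b, zt) ∧ zt ∈ ball 0 ε :=
    ((hslice a (hhalf ha)).eventually_lt continuousAt_const hψa).and <|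
      (continuousAt_const.eventually_lt (hslice b (hhalf hb)) hψb).and (ball_mem_nhds 0 hε)
  obtain ⟨δ, hδ, hδsign⟩ := Metric.eventually_nhds_iff_ball.mp hsign
  refine ⟨ε, hε, δ, hδ, fun z₁ zt h₁ h₂ => hmemW z₁ (mem_ball_zero_iff.mpr h₁) zt
    (hδsign zt (mem_ball_zero_iff.mpr h₂)).2.2, fun zt hzt Φ hΦ hΦψ => ?_⟩
  obtain ⟨hneg, hpos, hzt⟩ := hδsign zt (mem_ball_zero_iff.mpr hzt)
  have hzeros : {z ∈ ball (0 : ℂ) (ε / 2) | ψ (z, zt) = 0}.Infinite :=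
    infinite_setOf_zero_of_sign_change (by simp [Complex.rank_real_complex])
      (hψ.continuousOn.comp (Continuous.prodMk_left zt).continuousOn
        fun z hz => hmemW z (hhalf hz) zt hzt) ha hb hneg hpos
  refine hΦ.eqOn_zero_of_infinite_zeros (convex_ball 0 ε).isPreconnected
    (isCompact_closedBall 0 (ε / 2)) (closedBall_subset_ball (half_lt_self hε)) ?_
  exact hzeros.mono fun z hz => ⟨ball_subset_closedBall hz.1, hΦψ z (hhalf hz.1) hz.2⟩

/-- Vanishing principle: if `ψ` is real-valued and real analytic near `0 = (0, 0)` in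
`ℂⁿ = ℂ × ℂ^{n-1}`, with `ψ(0) = 0` and `z₁ ↦ ψ(z₁, 0)` having nonzero real derivative
at `0`, then there are `ε, δ > 0` such that for every `z̃` with `‖z̃‖ < δ`, any function
holomorphic on the disc `{|z₁| < ε}` vanishing on the slice `{z₁ : ψ(z₁, z̃) = 0}`
vanishes identically on the disc. -/
theorem holomorphic_vanishing_on_hypersurface_slice
    {n : ℕ} (hn : 1 ≤ n)
    (W : Set (ℂ × (Fin (n - 1) → ℂ))) (hW : IsOpen W) (h0W : ((0 : ℂ), (0 : Fin (n - 1) → ℂ)) ∈ W)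
    (ψ : ℂ × (Fin (n - 1) → ℂ) → ℝ) (hψ : AnalyticOnNhd ℝ ψ W)
    (hψ0 : ψ (0, 0) = 0)
    (ψ' : ℂ →L[ℝ] ℝ) (hψ' : HasFDerivAt (fun z₁ : ℂ => ψ (z₁, 0)) ψ' 0) (hψ'ne : ψ' ≠ 0) :
    ∃ ε > (0 : ℝ), ∃ δ > (0 : ℝ),
      (∀ (z₁ : ℂ) (zt : Fin (n - 1) → ℂ), ‖z₁‖ < ε → ‖zt‖ < δ → (z₁, zt) ∈ W) ∧
      ∀ zt : Fin (n - 1) → ℂ, ‖zt‖ < δ →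
        ∀ Φ : ℂ → ℂ, AnalyticOnNhd ℂ Φ (ball (0 : ℂ) ε) →
          (∀ z₁ ∈ ball (0 : ℂ) ε, ψ (z₁, zt) = 0 → Φ z₁ = 0) →
          ∀ z₁ ∈ ball (0 : ℂ) ε, Φ z₁ = 0 :=
  holomorphic_vanishing_on_hypersurface_slice_general W hW h0W ψ hψ hψ0 ψ' hψ' hψ'ne
end

section
/- Let n ≥ 1 and write points of ℂⁿ as (z₁, z̃) with z₁ ∈ ℂ and z̃ ∈ ℂ^{n−1}. Let ψ be a real-valued real-analytic function on a neighborhood of 0 in ℂⁿ with ψ(0) = 0, and suppose the real Fréchet derivative at 0 of the function z₁ ↦ ψ(z₁, 0) is nonzero (equivalently, ∂ψ/∂z₁(0) ≠ 0, since ψ is real-valued). Then there exist an open neighborhood V of 0 in ℂⁿ, an open neighborhood B of 0 in ℂ × ℂ^{n−1} × ℂ^{n−1}, and a holomorphic function ρ : B → ℂ such that for every z = (z₁, z̃) ∈ V with (conj z₁, z̃, conj z̃) ∈ B, one has ψ(z₁, z̃) = 0 if and only if z₁ = ρ(conj z₁, z̃, conj z̃). -/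
/-!
Expand `ψ` in its real power series at `0` and replace each real coordinate `Re zₖ`, `Im zₖ` by
`(zₖ + wₖ) / 2`, `(zₖ - wₖ) / (2i)` with `wₖ` a new independent variable. This gives a holomorphic
`Ψ(w₁, z̃, w̃, z₁)` with `Ψ(conj z₁, z̃, conj z̃, z₁) = ψ(z₁, z̃)`. Along the `z₁`-axis the real
derivative of `ψ` is `w ↦ conj w · ∂Ψ/∂w₁(0) + w · ∂Ψ/∂z₁(0)`, and a real-valued map of the form
`w ↦ conj w · a` vanishes, so `∂Ψ/∂z₁(0) ≠ 0`. The holomorphic implicit function theorem then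
solves `Ψ = 0` as `z₁ = ρ(w₁, z̃, w̃)`, and restricting to `w = conj z` gives the graph.
-/

open Complex ComplexConjugate Filter Topology
open scoped ContDiff

namespace FormalMultilinearSeries

variable {ι E X : Type*} [Fintype ι] [NormedAddCommGroup E] [NormedSpace ℝ E]
  [NormedAddCommGroup X] [NormedSpace ℂ X]

noncomputable def complexify (b : Module.Basis ι ℝ E) (c : ι → X →L[ℂ] ℂ)
    (p : FormalMultilinearSeries ℝ E ℝ) : FormalMultilinearSeries ℂ X ℂ :=
  fun k => ∑ f : Fin k → ι, ((p k (b ∘ f) : ℝ) : ℂ) •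
    (ContinuousMultilinearMap.mkPiAlgebra ℂ (Fin k) ℂ).compContinuousLinearMap (c ∘ f)

variable (b : Module.Basis ι ℝ E) (c : ι → X →L[ℂ] ℂ) (p : FormalMultilinearSeries ℝ E ℝ)

lemma complexify_apply (k : ℕ) (v : Fin k → X) :
    p.complexify b c k v = ∑ f : Fin k → ι, (p k (b ∘ f) : ℂ) * ∏ j, c (f j) (v j) := by
  simp [complexify]

lemma complexify_apply_diag {J : E → X} (hc : ∀ i z, c i (J z) = b.repr z i) (k : ℕ) (z : E) :
    p.complexify b c k (fun _ => J z) = p k (fun _ => z) := by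
  have hz : p k (fun _ => z) = ∑ f : Fin k → ι, (∏ j, b.repr z (f j)) • p k (b ∘ f) := by
    conv_lhs => rw [← b.sum_repr z]
    rw [(p k).map_sum]
    exact Finset.sum_congr rfl fun f _ => (p k).map_smul_univ _ _
  simp [complexify_apply, hc, hz, mul_comm]

lemma norm_complexify_le (k : ℕ) :
    ‖p.complexify b c k‖ ≤ (∑ i, ‖b i‖ * ‖c i‖) ^ k * ‖p k‖ := by
  refine ContinuousMultilinearMap.opNorm_le_bound (by positivity) fun v => ?_
  calc ‖p.complexify b c k v‖
      ≤ ∑ f : Fin k → ι, ‖p k‖ * (∏ j, ‖b (f j)‖) * ∏ j, (‖c (f j)‖ * ‖v j‖) := by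
        rw [complexify_apply]
        refine (norm_sum_le _ _).trans (Finset.sum_le_sum fun f _ => ?_)
        rw [norm_mul, norm_real, norm_prod]
        gcongr
        · exact (p k).le_opNorm _
        · exact (c (f _)).le_opNorm _
    _ = (∑ i, ‖b i‖ * ‖c i‖) ^ k * ‖p k‖ * ∏ j, ‖v j‖ := by
        rw [← Fin.prod_const, Fintype.prod_sum, Finset.sum_mul, Finset.sum_mul]
        refine Finset.sum_congr rfl fun f _ => ?_
        simp only [Finset.prod_mul_distrib]
        ring

lemma radius_complexify_pos (hp : 0 < p.radius) : 0 < (p.complexify b c).radius := by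
  obtain ⟨r, hr0, hrp⟩ := ENNReal.lt_iff_exists_nnreal_btwn.mp hp
  obtain ⟨C, -, hC⟩ := p.norm_mul_pow_le_of_lt_radius hrp
  set D : NNReal := ∑ i, ‖b i‖₊ * ‖c i‖₊ + 1
  have hD : (0 : ℝ) < D := by positivity
  refine lt_of_lt_of_le ?_ ((p.complexify b c).le_radius_of_bound C (r := r / D) fun k => ?_)
  · have : 0 < r := by exact_mod_cast hr0
    exact_mod_cast div_pos this (by positivity)
  calc ‖p.complexify b c k‖ * ((r / D : NNReal) : ℝ) ^ k
      ≤ (D : ℝ) ^ k * ‖p k‖ * ((r : ℝ) / D) ^ k := by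
        push_cast
        gcongr
        refine (norm_complexify_le b c p k).trans ?_
        gcongr
        simp [D]
    _ = ‖p k‖ * r ^ k := by
        rw [div_pow]
        field_simp
    _ ≤ C := hC k

end FormalMultilinearSeries

theorem AnalyticAt.exists_complexification {ι E X : Type*} [Fintype ι] [NormedAddCommGroup E]
    [NormedSpace ℝ E] [NormedAddCommGroup X] [NormedSpace ℂ X] {ψ : E → ℝ}
    (hψ : AnalyticAt ℝ ψ 0) (b : Module.Basis ι ℝ E) (c : ι → X →L[ℂ] ℂ) (J : E →L[ℝ] X)
    (hc : ∀ i z, c i (J z) = b.repr z i) :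
    ∃ Ψ : X → ℂ, AnalyticAt ℂ Ψ 0 ∧ ∀ᶠ z in 𝓝 0, Ψ (J z) = ψ z := by
  obtain ⟨p, r, hpr⟩ := hψ
  have hq := (p.complexify b c).hasFPowerSeriesOnBall
    (p.radius_complexify_pos b c (hpr.r_pos.trans_le hpr.r_le))
  refine ⟨(p.complexify b c).sum, hq.analyticAt, ?_⟩
  have hJ : Tendsto J (𝓝 0) (𝓝 0) := by simpa using J.continuous.tendsto 0
  filter_upwards [Metric.eball_mem_nhds 0 hpr.r_pos, hJ (Metric.eball_mem_nhds 0 hq.r_pos)]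
    with z hz hJz
  have hψz := (hpr.hasSum hz).mapL ofRealCLM
  have hΨz := hq.hasSum hJz
  simp only [zero_add, p.complexify_apply_diag b c hc] at hψz hΨz
  exact hΨz.unique hψz

lemma ContinuousLinearMap.isInvertible_of_ne_zero {𝕜 : Type*} [NontriviallyNormedField 𝕜]
    {f : 𝕜 →L[𝕜] 𝕜} (hf : f ≠ 0) : f.IsInvertible := by
  have h1 : f 1 ≠ 0 := fun h => hf (ContinuousLinearMap.ext_ring (by simpa using h))
  exact ⟨ContinuousLinearEquiv.unitsEquivAut 𝕜 (Units.mk0 _ h1),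
    ContinuousLinearMap.ext_ring (by simp)⟩

lemma ContinuousLinearMap.eq_zero_of_forall_ofReal_eq_conj_mul {ℓ : ℂ →L[ℝ] ℝ} {a : ℂ}
    (h : ∀ w, (ℓ w : ℂ) = conj w * a) : ℓ = 0 := by
  have ha : a = ℓ 1 := by simpa using (h 1).symm
  have hI := congrArg im (h I)
  simp [ha] at hI
  ext w
  simpa [ha, hI] using h w

section reImCoord

variable {X : Type*} [NormedAddCommGroup X] [NormedSpace ℂ X]

noncomputable def reImCoord (a a' : X →L[ℂ] ℂ) : Fin 2 → X →L[ℂ] ℂ :=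
  ![(2⁻¹ : ℂ) • (a + a'), (2 * I)⁻¹ • (a - a')]

lemma reImCoord_apply {a a' : X →L[ℂ] ℂ} {x : X} (h : a' x = conj (a x)) (i : Fin 2) :
    reImCoord a a' i x = basisOneI.repr (a x) i := by
  fin_cases i
  · simp [reImCoord, h, ← mul_add, add_conj]
  · simp [reImCoord, h, sub_conj]
    field_simp
    simp

end reImCoord

section Polarization

variable {m : ℕ}

noncomputable def realBasis (m : ℕ) :
    Module.Basis (Fin 2 ⊕ (Σ _ : Fin m, Fin 2)) ℝ (ℂ × (Fin m → ℂ)) :=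
  basisOneI.prod (Pi.basis fun _ => basisOneI)

/-- The variable `z₁` to be solved for comes last, since `ContDiffAt.implicitFunction` solves for
the second factor of a product. -/
noncomputable def polarize (m : ℕ) :
    (ℂ × (Fin m → ℂ)) →L[ℝ] (ℂ × (Fin m → ℂ) × (Fin m → ℂ)) × ℂ :=
  LinearMap.toContinuousLinearMap
    { toFun := fun z => ((conj z.1, z.2, fun j => conj (z.2 j)), z.1)
      map_add' := fun z w => by ext <;> simp
      map_smul' := fun r z => by ext <;> simp }

@[simp] lemma polarize_apply (z : ℂ × (Fin m → ℂ)) :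
    polarize m z = ((conj z.1, z.2, fun j => conj (z.2 j)), z.1) := rfl

noncomputable def polarizedCoord (m : ℕ) :
    Fin 2 ⊕ (Σ _ : Fin m, Fin 2) → ((ℂ × (Fin m → ℂ) × (Fin m → ℂ)) × ℂ) →L[ℂ] ℂ
  | .inl i => reImCoord (.snd ℂ _ ℂ) (.fst ℂ ℂ _ ∘L .fst ℂ _ ℂ) i
  | .inr ⟨j, i⟩ => reImCoord (.proj j ∘L .fst ℂ _ _ ∘L .snd ℂ ℂ _ ∘L .fst ℂ _ ℂ)
      (.proj j ∘L .snd ℂ _ _ ∘L .snd ℂ ℂ _ ∘L .fst ℂ _ ℂ) i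

lemma polarizedCoord_polarize (i : Fin 2 ⊕ (Σ _ : Fin m, Fin 2)) (z : ℂ × (Fin m → ℂ)) :
    polarizedCoord m i (polarize m z) = (realBasis m).repr z i := by
  rcases i with i | ⟨j, i⟩
  · rw [polarizedCoord, reImCoord_apply (by simp), realBasis, Module.Basis.prod_repr_inl]
    rfl
  · rw [polarizedCoord, reImCoord_apply (by simp), realBasis, Module.Basis.prod_repr_inr,
      Pi.basis_repr]
    rfl

lemma isInvertible_fderiv_comp_inr_of_comp_polarize {Ψ : (ℂ × (Fin m → ℂ) × (Fin m → ℂ)) × ℂ → ℂ}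
    {ψ : ℂ × (Fin m → ℂ) → ℝ} (hΨ : DifferentiableAt ℂ Ψ 0)
    (hΨψ : ∀ᶠ z in 𝓝 0, Ψ (polarize m z) = ψ z) {ψ' : ℂ →L[ℝ] ℝ}
    (hψ' : HasFDerivAt (fun w : ℂ => ψ (w, 0)) ψ' 0) (hψ'ne : ψ' ≠ 0) :
    (fderiv ℂ Ψ 0 ∘L .inr ℂ _ ℂ).IsInvertible := by
  set L := fderiv ℂ Ψ 0
  have hline : HasFDerivAt (fun w : ℂ => Ψ (polarize m (w, 0)))
      (L.restrictScalars ℝ ∘L polarize m ∘L .inl ℝ ℂ (Fin m → ℂ)) 0 := by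
    have hΨ' : HasFDerivAt Ψ (L.restrictScalars ℝ) ((polarize m ∘L .inl ℝ ℂ (Fin m → ℂ)) 0) := by
      rw [map_zero]
      exact hΨ.hasFDerivAt.restrictScalars ℝ
    exact hΨ'.comp 0 (polarize m ∘L .inl ℝ ℂ (Fin m → ℂ)).hasFDerivAt
  have hinl : Tendsto (fun w : ℂ => ((w, 0) : ℂ × (Fin m → ℂ))) (𝓝 0) (𝓝 0) :=
    (continuous_id.prodMk continuous_const).tendsto' 0 0 rfl
  have hline_eq : (fun w : ℂ => Ψ (polarize m (w, 0))) =ᶠ[𝓝 0] fun w => (ψ (w, 0) : ℂ) :=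
    hinl.eventually hΨψ
  have hderiv := (ofRealCLM.hasFDerivAt.comp (0 : ℂ) hψ').unique
    (hline.congr_of_eventuallyEq hline_eq.symm)
  refine ContinuousLinearMap.isInvertible_of_ne_zero fun h => hψ'ne ?_
  refine ContinuousLinearMap.eq_zero_of_forall_ofReal_eq_conj_mul
    (a := L ((1, 0, 0), 0)) fun w => ?_
  have hw : (ψ' w : ℂ) = L ((conj w, 0, 0), w) := by
    simpa [← Pi.zero_def] using congrArg (· w) hderiv
  have hsplit : (((conj w, 0, 0), w) : (ℂ × (Fin m → ℂ) × (Fin m → ℂ)) × ℂ) =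
      conj w • ((1, 0, 0), 0) + w • (0, 1) := by
    ext <;> simp
  have h01 : L (0, 1) = 0 := by simpa using congrArg (· 1) h
  rw [hw, hsplit, map_add, map_smul, map_smul, h01, smul_zero, add_zero, smul_eq_mul]

end Polarization

theorem hypersurface_graph_representation_general
    {n : ℕ}
    (W : Set (ℂ × (Fin (n - 1) → ℂ))) (h0W : ((0 : ℂ), (0 : Fin (n - 1) → ℂ)) ∈ W)
    (ψ : ℂ × (Fin (n - 1) → ℂ) → ℝ) (hψ : AnalyticOnNhd ℝ ψ W)
    (hψ0 : ψ (0, 0) = 0)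
    (ψ' : ℂ →L[ℝ] ℝ) (hψ' : HasFDerivAt (fun z₁ : ℂ => ψ (z₁, 0)) ψ' 0) (hψ'ne : ψ' ≠ 0) :
    ∃ V : Set (ℂ × (Fin (n - 1) → ℂ)), IsOpen V ∧ ((0 : ℂ), (0 : Fin (n - 1) → ℂ)) ∈ V ∧
    ∃ B : Set (ℂ × (Fin (n - 1) → ℂ) × (Fin (n - 1) → ℂ)), IsOpen B ∧
      ((0 : ℂ), (0 : Fin (n - 1) → ℂ), (0 : Fin (n - 1) → ℂ)) ∈ B ∧
    ∃ ρ : ℂ × (Fin (n - 1) → ℂ) × (Fin (n - 1) → ℂ) → ℂ, AnalyticOnNhd ℂ ρ B ∧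
      ∀ z₁ : ℂ, ∀ zt : Fin (n - 1) → ℂ, (z₁, zt) ∈ V →
        (starRingEnd ℂ z₁, zt, fun j => starRingEnd ℂ (zt j)) ∈ B →
        (ψ (z₁, zt) = 0 ↔ z₁ = ρ (starRingEnd ℂ z₁, zt, fun j => starRingEnd ℂ (zt j))) := by
  obtain ⟨Ψ, hΨ, hΨψ⟩ := (hψ 0 h0W).exists_complexification (realBasis (n - 1))
    (polarizedCoord (n - 1)) (polarize (n - 1)) polarizedCoord_polarize
  have hinv := isInvertible_fderiv_comp_inr_of_comp_polarize hΨ.differentiableAt hΨψ hψ' hψ'ne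
  have hΨω : ContDiffAt ℂ ω Ψ 0 := hΨ.contDiffAt
  set ρ := hΨω.implicitFunction (by simp) hinv
  have hΨ0 : Ψ 0 = 0 := by
    have h := hΨψ.self_of_nhds
    rw [map_zero] at h
    exact h.trans (ofReal_eq_zero.mpr hψ0)
  have himplicit : ∀ᶠ x in 𝓝 0, Ψ x = 0 ↔ ρ x.1 = x.2 := by
    simpa [hΨ0] using hΨω.eventually_apply_eq_iff_implicitFunction (by simp) hinv
  have hgraph := hΨψ.and
    ((polarize (n - 1)).continuous.tendsto' 0 0 (map_zero _) |>.eventually himplicit)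
  refine ⟨interior {z | _}, isOpen_interior, mem_interior_iff_mem_nhds.mpr hgraph,
    {u | AnalyticAt ℂ ρ u}, isOpen_analyticAt ℂ ρ,
    (hΨω.contDiffAt_implicitFunction (by simp) hinv).analyticAt, ρ, fun u hu => hu, ?_⟩
  rintro z₁ zt hz -
  obtain ⟨hΨz, hiff⟩ := interior_subset hz
  rw [← ofReal_eq_zero, ← hΨz, hiff, eq_comm]
  rfl

/-- Graph representation of a real analytic hypersurface: if `ψ` is real-valued and real
analytic near `0 = (0, 0)` in `ℂⁿ = ℂ × ℂ^{n-1}`, with `ψ(0) = 0` and `z₁ ↦ ψ(z₁, 0)`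
having nonzero real derivative at `0`, then near `0` the set `{ψ = 0}` can be written
as the graph `z₁ = ρ(conj z₁, z̃, conj z̃)` for a holomorphic function `ρ`. -/
theorem hypersurface_graph_representation
    {n : ℕ} (hn : 1 ≤ n)
    (W : Set (ℂ × (Fin (n - 1) → ℂ))) (hW : IsOpen W) (h0W : ((0 : ℂ), (0 : Fin (n - 1) → ℂ)) ∈ W)
    (ψ : ℂ × (Fin (n - 1) → ℂ) → ℝ) (hψ : AnalyticOnNhd ℝ ψ W)
    (hψ0 : ψ (0, 0) = 0)
    (ψ' : ℂ →L[ℝ] ℝ) (hψ' : HasFDerivAt (fun z₁ : ℂ => ψ (z₁, 0)) ψ' 0) (hψ'ne : ψ' ≠ 0) :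
    ∃ V : Set (ℂ × (Fin (n - 1) → ℂ)), IsOpen V ∧ ((0 : ℂ), (0 : Fin (n - 1) → ℂ)) ∈ V ∧
    ∃ B : Set (ℂ × (Fin (n - 1) → ℂ) × (Fin (n - 1) → ℂ)), IsOpen B ∧
      ((0 : ℂ), (0 : Fin (n - 1) → ℂ), (0 : Fin (n - 1) → ℂ)) ∈ B ∧
    ∃ ρ : ℂ × (Fin (n - 1) → ℂ) × (Fin (n - 1) → ℂ) → ℂ, AnalyticOnNhd ℂ ρ B ∧
      ∀ z₁ : ℂ, ∀ zt : Fin (n - 1) → ℂ, (z₁, zt) ∈ V →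
        (starRingEnd ℂ z₁, zt, fun j => starRingEnd ℂ (zt j)) ∈ B →
        (ψ (z₁, zt) = 0 ↔ z₁ = ρ (starRingEnd ℂ z₁, zt, fun j => starRingEnd ℂ (zt j))) :=
  hypersurface_graph_representation_general W h0W ψ hψ hψ0 ψ' hψ' hψ'ne
end
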